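/- For a, b ∈ SL(2,ℂ), set y = b·m·b⁻¹. Then the matrix identities y⁻¹·ã = ã·e + b̃·[ã,b̃] and y·ã = ã·e⁻¹ − b̃·[ã,b̃] hold. -/
import Mathlib


abbrev Mat := Matrix (Fin 2) (Fin 2) ℂ

/-- The symplectic form `⟨x,y⟩ = x₁y₂ − x₂y₁` of two column vectors. -/
def symp (x y : Fin 2 → ℂ) : ℂ := x 0 * y 1 - x 1 * y 0

/-- First column `a₁` of a 2×2 matrix. -/
def col1 (a : Mat) : Fin 2 → ℂ := fun i => a i 0

/-- Third column `a₃ = a₁ − z·a₂`. -/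
def col3 (z : ℂ) (a : Mat) : Fin 2 → ℂ := fun i => a i 0 - z * a i 1

/-- The matrix `ã` with columns `(a₁, a₃)`. -/
def tilde (z : ℂ) (a : Mat) : Mat :=
  !![a 0 0, a 0 0 - z * a 0 1;
     a 1 0, a 1 0 - z * a 1 1]

/-- The quandle matrix `[ã,b̃] = diag(⟨a₁,b₃⟩, ⟨a₃,b₁⟩)`. -/
def brak (z : ℂ) (a b : Mat) : Mat :=
  !![symp (col1 a) (col3 z b), 0; 0, symp (col3 z a) (col1 b)]

/-- For `a, b ∈ SL(2,ℂ)` and `y = b·m·b⁻¹`, with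
`e = diag(M, M⁻¹)`, one has `y⁻¹·ã = ã·e + b̃·[ã,b̃]` and
`y·ã = ã·e⁻¹ − b̃·[ã,b̃]`. -/
theorem quandle_identities (M : ℂ) (hM0 : M ≠ 0) (hM1 : M ≠ 1) (hMneg1 : M ≠ -1)
    (a b : Mat) (ha : a.det = 1) (hb : b.det = 1)
    (y : Mat) (hy : y = b * !![M, 1; 0, M⁻¹] * b⁻¹) :
    y⁻¹ * tilde (M - M⁻¹) a =
        tilde (M - M⁻¹) a * !![M, 0; 0, M⁻¹] +
          tilde (M - M⁻¹) b * brak (M - M⁻¹) a b ∧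
    y * tilde (M - M⁻¹) a =
        tilde (M - M⁻¹) a * (!![M, 0; 0, M⁻¹])⁻¹ -
          tilde (M - M⁻¹) b * brak (M - M⁻¹) a b := by
  have hdeta : a 0 0 * a 1 1 - a 0 1 * a 1 0 = 1 := by
    rw [Matrix.det_fin_two] at ha; linear_combination ha
  have hdetb : b 0 0 * b 1 1 - b 0 1 * b 1 0 = 1 := by
    rw [Matrix.det_fin_two] at hb; linear_combination hb
  have hMW : M * M⁻¹ = 1 := mul_inv_cancel₀ hM0
  have hbinv : b⁻¹ = !![b 1 1, -(b 0 1); -(b 1 0), b 0 0] := by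
    rw [Matrix.inv_def, hb, Matrix.adjugate_fin_two]; simp
  subst hy
  have hm : (!![M, 1; 0, M⁻¹] : Mat) * !![M⁻¹, -1; 0, M] = 1 := by
    ext i j
    fin_cases i <;> fin_cases j <;>
      simp [Matrix.mul_apply, Fin.sum_univ_two, hM0]
  have h1 : b⁻¹ * b = 1 := Matrix.nonsing_inv_mul b (by rw [hb]; exact isUnit_one)
  have hyinv : (b * !![M, 1; 0, M⁻¹] * b⁻¹)⁻¹ =
      b * !![M⁻¹, -1; 0, M] * b⁻¹ := by
    apply Matrix.inv_eq_right_inv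
    calc b * !![M, 1; 0, M⁻¹] * b⁻¹ * (b * !![M⁻¹, -1; 0, M] * b⁻¹)
        = b * (!![M, 1; 0, M⁻¹] * ((b⁻¹ * b) * !![M⁻¹, -1; 0, M])) * b⁻¹ := by
          simp only [Matrix.mul_assoc]
      _ = b * b⁻¹ := by rw [h1, Matrix.one_mul, hm, Matrix.mul_one]
      _ = 1 := Matrix.mul_nonsing_inv b (by rw [hb]; exact isUnit_one)
  have he : (!![M, 0; 0, M⁻¹] : Mat)⁻¹ = !![M⁻¹, 0; 0, M] := by
    apply Matrix.inv_eq_right_inv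
    ext i j
    fin_cases i <;> fin_cases j <;>
      simp [Matrix.mul_apply, Fin.sum_univ_two, hM0]
  constructor
  · rw [hyinv, hbinv]
    ext i j
    fin_cases i <;> fin_cases j <;>
      simp only [tilde, brak, symp, col1, col3, Matrix.mul_apply, Matrix.add_apply,
        Fin.sum_univ_two, Fin.mk_zero, Fin.mk_one, Fin.isValue,
        Matrix.cons_val', Matrix.cons_val_zero, Matrix.cons_val_one, Matrix.head_cons,
        Matrix.empty_val', Matrix.cons_val_fin_one, Matrix.head_fin_const, Matrix.of_apply]
    · linear_combination (0:ℂ) * hMW + (M*a 0 0) * hdetb + (0:ℂ) * hdeta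
    · linear_combination (a 0 1 + a 0 1*b 0 1*b 1 0 + (-1)*a 0 1*b 0 0*b 1 1) * hMW + ((-1)*a 0 1 + M⁻¹*a 0 0 + M⁻¹^2*a 0 1) * hdetb + (0:ℂ) * hdeta
    · linear_combination (0:ℂ) * hMW + (M*a 1 0) * hdetb + (0:ℂ) * hdeta
    · linear_combination (a 1 1 + a 1 1*b 0 1*b 1 0 + (-1)*a 1 1*b 0 0*b 1 1) * hMW + ((-1)*a 1 1 + M⁻¹*a 1 0 + M⁻¹^2*a 1 1) * hdetb + (0:ℂ) * hdeta
  · rw [hbinv, he]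
    ext i j
    fin_cases i <;> fin_cases j <;>
      simp only [tilde, brak, symp, col1, col3, Matrix.mul_apply, Matrix.sub_apply,
        Fin.sum_univ_two, Fin.mk_zero, Fin.mk_one, Fin.isValue,
        Matrix.cons_val', Matrix.cons_val_zero, Matrix.cons_val_one, Matrix.head_cons,
        Matrix.empty_val', Matrix.cons_val_fin_one, Matrix.head_fin_const, Matrix.of_apply]
    · linear_combination (0:ℂ) * hMW + (M⁻¹*a 0 0) * hdetb + (0:ℂ) * hdeta
    · linear_combination ((-1)*a 0 1 + (-1)*a 0 1*b 0 1*b 1 0 + a 0 1*b 0 0*b 1 1) * hMW + (a 0 1 + M*a 0 0 + (-1)*M^2*a 0 1) * hdetb + (0:ℂ) * hdeta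
    · linear_combination (0:ℂ) * hMW + (M⁻¹*a 1 0) * hdetb + (0:ℂ) * hdeta
    · linear_combination ((-1)*a 1 1 + (-1)*a 1 1*b 0 1*b 1 0 + a 1 1*b 0 0*b 1 1) * hMW + (a 1 1 + M*a 1 0 + (-1)*M^2*a 1 1) * hdetb + (0:ℂ) * hdeta
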